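/- arXiv:1712.04024 — 4 statements merged into one kernel-verified Lean document; each statement's English description precedes it below -/
import Mathlib

section
/- If l = log f where f > 0 solves f_t = Δf + a f − b f³, then (∂_t − Δ)(|∇l|²) = 2∇l·∇(Δl) + 2∇l·∇(|∇l|²) − 4b|∇l|² e^{2l} − Δ(|∇l|²). -/
open scoped ContDiff

noncomputable def lap {n : ℕ} (f : EuclideanSpace ℝ (Fin n) → ℝ)
    (x : EuclideanSpace ℝ (Fin n)) : ℝ :=
  ∑ i, fderiv ℝ (fun y => fderiv ℝ f y (EuclideanSpace.single i 1)) x (EuclideanSpace.single i 1)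

private lemma nws_inner_grad {n : ℕ} (g : EuclideanSpace ℝ (Fin n) → ℝ)
    (x v : EuclideanSpace ℝ (Fin n)) :
    (inner ℝ (gradient g x) v : ℝ) = fderiv ℝ g x v := by
  simp [gradient, InnerProductSpace.toDual_symm_apply]

private lemma nws_inner_grad_grad {n : ℕ} (g h : EuclideanSpace ℝ (Fin n) → ℝ)
    (x : EuclideanSpace ℝ (Fin n)) :
    (inner ℝ (gradient g x) (gradient h x) : ℝ)
      = ∑ i, fderiv ℝ g x (EuclideanSpace.single i 1) *
          fderiv ℝ h x (EuclideanSpace.single i 1) := by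
  rw [← OrthonormalBasis.sum_inner_mul_inner (EuclideanSpace.basisFun (Fin n) ℝ)]
  refine Finset.sum_congr rfl fun i _ => ?_
  rw [EuclideanSpace.basisFun_apply]
  rw [nws_inner_grad, real_inner_comm, nws_inner_grad]

private lemma nws_norm_grad_sq {n : ℕ} (g : EuclideanSpace ℝ (Fin n) → ℝ)
    (x : EuclideanSpace ℝ (Fin n)) :
    ‖gradient g x‖ ^ 2 = ∑ i, (fderiv ℝ g x (EuclideanSpace.single i 1)) ^ 2 := by
  rw [← real_inner_self_eq_norm_sq, nws_inner_grad_grad]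
  simp [sq]

private lemma nws_sliceX {n : ℕ} {G : EuclideanSpace ℝ (Fin n) × ℝ → ℝ}
    {ψ : EuclideanSpace ℝ (Fin n) × ℝ →L[ℝ] ℝ} {y : EuclideanSpace ℝ (Fin n)} {s : ℝ}
    (h : HasFDerivAt G ψ (y, s)) :
    HasFDerivAt (fun z => G (z, s)) (ψ.comp (ContinuousLinearMap.inl ℝ _ ℝ)) y :=
  h.comp y (hasFDerivAt_prodMk_left y s)

private lemma nws_sliceT {n : ℕ} {G : EuclideanSpace ℝ (Fin n) × ℝ → ℝ}
    {ψ : EuclideanSpace ℝ (Fin n) × ℝ →L[ℝ] ℝ} {y : EuclideanSpace ℝ (Fin n)} {s : ℝ}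
    (h : HasFDerivAt G ψ (y, s)) :
    HasDerivAt (fun r => G (y, r)) (ψ (0, 1)) s := by
  simpa [Function.comp_def] using h.comp_hasDerivAt s ((hasDerivAt_const s y).prodMk (hasDerivAt_id s))

/-- Evolution equation for `|∇l|²` under the Newell-Whitehead flow:
`(∂_t − Δ)(|∇l|²) = 2∇l·∇(Δl) + 2∇l·∇(|∇l|²) − 4b|∇l|² e^{2l} − Δ(|∇l|²)`. -/
theorem grad_log_sq_evolution {n : ℕ} (a b : ℝ) (ha : 0 < a) (hb : 0 < b)
    (f : ℝ → EuclideanSpace ℝ (Fin n) → ℝ)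
    (hsmooth : ContDiff ℝ (⊤ : ℕ∞) (fun p : EuclideanSpace ℝ (Fin n) × ℝ => f p.2 p.1))
    (hpos : ∀ t x, 0 < t → 0 < f t x)
    (hsol : ∀ t x, 0 < t →
      deriv (fun s => f s x) t = lap (f t) x + a * f t x - b * (f t x) ^ 3)
    (l : ℝ → EuclideanSpace ℝ (Fin n) → ℝ)
    (hl : ∀ t x, l t x = Real.log (f t x)) :
    ∀ t x, 0 < t →
      deriv (fun s => ‖gradient (l s) x‖ ^ 2) t
          - lap (fun y => ‖gradient (l t) y‖ ^ 2) x =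
        2 * (inner ℝ (gradient (l t) x) (gradient (fun y => lap (l t) y) x) : ℝ)
          + 2 * (inner ℝ (gradient (l t) x)
              (gradient (fun y => ‖gradient (l t) y‖ ^ 2) x) : ℝ)
          - 4 * b * ‖gradient (l t) x‖ ^ 2 * Real.exp (2 * l t x)
          - lap (fun y => ‖gradient (l t) y‖ ^ 2) x := by
  intro t x ht
  set F : EuclideanSpace ℝ (Fin n) × ℝ → ℝ := fun p => f p.2 p.1 with hFdef
  set L : EuclideanSpace ℝ (Fin n) × ℝ → ℝ := fun p => Real.log (F p) with hLdef
  have hlL : ∀ s y, l s y = L (y, s) := fun s y => hl s y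
  have hFq : ∀ q : EuclideanSpace ℝ (Fin n) × ℝ, 0 < q.2 → 0 < F q := fun q hq => hpos _ _ hq
  have hF : ContDiff ℝ ∞ F := hsmooth.of_le (by simp)
  have hLq : ∀ q : EuclideanSpace ℝ (Fin n) × ℝ, 0 < q.2 → ContDiffAt ℝ ∞ L q := by
    intro q hq
    exact (Real.contDiffAt_log.mpr (hFq q hq).ne').comp q hF.contDiffAt
  -- partial derivative of a V-smooth function is V-smooth
  have hD : ∀ (K : EuclideanSpace ℝ (Fin n) × ℝ → ℝ),
      (∀ q : EuclideanSpace ℝ (Fin n) × ℝ, 0 < q.2 → ContDiffAt ℝ ∞ K q) →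
      ∀ (v : EuclideanSpace ℝ (Fin n) × ℝ),
      ∀ q : EuclideanSpace ℝ (Fin n) × ℝ, 0 < q.2 →
        ContDiffAt ℝ ∞ (fun q' => fderiv ℝ K q' v) q := by
    intro K hK v q hq
    exact (ContinuousLinearMap.apply ℝ ℝ v).contDiff.comp_contDiffAt q
      ((hK q hq).fderiv_right (by simp))
  -- x-slice derivative formula
  have hsliceX : ∀ (K : EuclideanSpace ℝ (Fin n) × ℝ → ℝ),
      (∀ q : EuclideanSpace ℝ (Fin n) × ℝ, 0 < q.2 → ContDiffAt ℝ ∞ K q) →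
      ∀ (z : EuclideanSpace ℝ (Fin n)) (s : ℝ), 0 < s →
      ∀ v : EuclideanSpace ℝ (Fin n),
        fderiv ℝ (fun y => K (y, s)) z v = fderiv ℝ K (z, s) (v, 0) := by
    intro K hK z s hs v
    have h := ((hK (z, s) hs).differentiableAt (by norm_num)).hasFDerivAt
    rw [(nws_sliceX h).fderiv]
    rfl
  set G : Fin n → (EuclideanSpace ℝ (Fin n) × ℝ) → ℝ :=
    fun i q => fderiv ℝ L q (EuclideanSpace.single i 1, (0 : ℝ)) with hGdef
  set Gt : (EuclideanSpace ℝ (Fin n) × ℝ) → ℝ := fun q => fderiv ℝ L q (0, 1) with hGtdef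
  have hGq : ∀ i, ∀ q : EuclideanSpace ℝ (Fin n) × ℝ, 0 < q.2 → ContDiffAt ℝ ∞ (G i) q :=
    fun i => hD L hLq _
  have hGtq : ∀ q : EuclideanSpace ℝ (Fin n) × ℝ, 0 < q.2 → ContDiffAt ℝ ∞ Gt q :=
    hD L hLq _
  -- first spatial partials of l
  have hgradl : ∀ s : ℝ, 0 < s → ∀ z, ∀ i,
      fderiv ℝ (l s) z (EuclideanSpace.single i 1) = G i (z, s) := by
    intro s hs z i
    have : l s = fun y => L (y, s) := funext fun y => hlL s y
    rw [this, hsliceX L hLq z s hs]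
  -- laplacian of l in terms of G
  have hlapl : ∀ s : ℝ, 0 < s → ∀ z,
      lap (l s) z = ∑ i, fderiv ℝ (G i) (z, s) (EuclideanSpace.single i 1, (0 : ℝ)) := by
    intro s hs z
    unfold lap
    refine Finset.sum_congr rfl fun i _ => ?_
    have h1 : (fun y => fderiv ℝ (l s) y (EuclideanSpace.single i 1))
        = fun y => G i (y, s) := funext fun y => hgradl s hs y i
    rw [h1, hsliceX (G i) (hGq i) z s hs]
  -- |∇ l|² in terms of G
  have hnsq : ∀ s : ℝ, 0 < s → ∀ z,
      ‖gradient (l s) z‖ ^ 2 = ∑ i, (G i (z, s)) ^ 2 := by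
    intro s hs z
    rw [nws_norm_grad_sq]
    exact Finset.sum_congr rfl fun i _ => by rw [hgradl s hs z i]
  -- chain rule: first derivatives of L in terms of F
  have hFdiff : ∀ q : EuclideanSpace ℝ (Fin n) × ℝ, HasFDerivAt F (fderiv ℝ F q) q :=
    fun q => (hF.differentiable (by norm_num) q).hasFDerivAt
  have hLc : ∀ q : EuclideanSpace ℝ (Fin n) × ℝ, 0 < q.2 →
      HasFDerivAt L ((F q)⁻¹ • fderiv ℝ F q) q := by
    intro q hq
    simpa [Function.comp_def, hLdef] using
      (Real.hasDerivAt_log (hFq q hq).ne').comp_hasFDerivAt q (hFdiff q)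
  have hLd : ∀ q : EuclideanSpace ℝ (Fin n) × ℝ, 0 < q.2 →
      ∀ v, fderiv ℝ L q v = fderiv ℝ F q v / F q := by
    intro q hq v
    rw [(hLc q hq).fderiv]
    simp [smul_eq_mul, div_eq_inv_mul]
  -- second derivatives of G i in terms of F (quotient rule)
  have hGder : ∀ i, ∀ q : EuclideanSpace ℝ (Fin n) × ℝ, 0 < q.2 → ∀ w,
      fderiv ℝ (G i) q w =
        fderiv ℝ (fun q' => fderiv ℝ F q' (EuclideanSpace.single i 1, (0 : ℝ))) q w / F q
          - fderiv ℝ F q (EuclideanSpace.single i 1, (0 : ℝ)) * fderiv ℝ F q w / F q ^ 2 := by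
    intro i q hq w
    have hFne := (hFq q hq).ne'
    have hFdq : ∀ q' : EuclideanSpace ℝ (Fin n) × ℝ, 0 < q'.2 → ContDiffAt ℝ ∞
        (fun q'' => fderiv ℝ F q'' (EuclideanSpace.single i 1, (0 : ℝ))) q' :=
      hD F (fun q' _ => hF.contDiffAt) _
    have hc : HasFDerivAt (fun q' => fderiv ℝ F q' (EuclideanSpace.single i 1, (0 : ℝ)))
        (fderiv ℝ (fun q' => fderiv ℝ F q' (EuclideanSpace.single i 1, (0 : ℝ))) q) q :=
      ((hFdq q hq).differentiableAt (by norm_num)).hasFDerivAt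
    have hinv : HasFDerivAt (fun q' => (F q')⁻¹) ((-(F q ^ 2)⁻¹) • fderiv ℝ F q) q := by
      have := (hasDerivAt_inv hFne).comp_hasFDerivAt q (hFdiff q)
      exact this
    have hm : HasFDerivAt (fun q' => fderiv ℝ F q' (EuclideanSpace.single i 1, (0 : ℝ)) * (F q')⁻¹) _ q := hc.mul hinv
    have hev : G i =ᶠ[nhds q] fun q' => fderiv ℝ F q' (EuclideanSpace.single i 1, (0 : ℝ)) * (F q')⁻¹ := by
      filter_upwards [(isOpen_lt continuous_const continuous_snd).mem_nhds hq] with q' hq'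
      rw [hGdef]
      simp only
      rw [hLd q' hq' _, div_eq_mul_inv]
    rw [hev.fderiv_eq, hm.fderiv]
    simp only [ContinuousLinearMap.add_apply, ContinuousLinearMap.smul_apply, smul_eq_mul,
      ContinuousLinearMap.neg_apply]
    field_simp
    ring
  have hFdC : ∀ v : EuclideanSpace ℝ (Fin n) × ℝ,
      ContDiff ℝ ∞ (fun q' => fderiv ℝ F q' v) := fun v =>
    (ContinuousLinearMap.apply ℝ ℝ v).contDiff.comp (hF.fderiv_right (by simp))
  -- PDE for f translated to F
  have hFt : ∀ (z) (s : ℝ), deriv (fun r => f r z) s = fderiv ℝ F (z, s) (0, 1) := by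
    intro z s
    exact (nws_sliceT (hFdiff (z, s))).deriv
  have hlapf : ∀ (z) (s : ℝ),
      lap (f s) z = ∑ i, fderiv ℝ
        (fun q' => fderiv ℝ F q' (EuclideanSpace.single i 1, (0 : ℝ))) (z, s)
        (EuclideanSpace.single i 1, (0 : ℝ)) := by
    intro z s
    unfold lap
    refine Finset.sum_congr rfl fun i _ => ?_
    have h1 : (fun y => fderiv ℝ (f s) y (EuclideanSpace.single i 1))
        = fun y => fderiv ℝ F (y, s) (EuclideanSpace.single i 1, (0 : ℝ)) := by
      funext y
      rw [(nws_sliceX (hFdiff (y, s))).fderiv]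
      rfl
    rw [h1, (nws_sliceX (((hFdC _).differentiable (by norm_num) (z, s)).hasFDerivAt)).fderiv]
    rfl
  set K2 : (EuclideanSpace ℝ (Fin n) × ℝ) → ℝ :=
    fun q => ∑ j, fderiv ℝ (G j) q (EuclideanSpace.single j 1, (0 : ℝ)) with hK2def
  set K3 : (EuclideanSpace ℝ (Fin n) × ℝ) → ℝ := fun q => ∑ j, (G j q) ^ 2 with hK3def
  -- the PDE satisfied by L : L_t = ΔL + |∇L|² + a - b e^{2L}
  have hC : ∀ q : EuclideanSpace ℝ (Fin n) × ℝ, 0 < q.2 →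
      Gt q = K2 q + K3 q + a - b * Real.exp (2 * L q) := by
    rintro ⟨z, s⟩ hq
    have hF0 : 0 < F (z, s) := hFq _ hq
    have hexp : Real.exp (2 * L (z, s)) = F (z, s) ^ 2 := by
      rw [hLdef]
      simp only
      rw [show (2 : ℝ) * Real.log (F (z, s)) = Real.log (F (z, s) ^ 2) by
        rw [Real.log_pow]; push_cast; ring]
      exact Real.exp_log (pow_pos hF0 2)
    have e1 : Gt (z, s) = ((∑ j, fderiv ℝ
        (fun q' => fderiv ℝ F q' (EuclideanSpace.single j 1, (0 : ℝ))) (z, s)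
        (EuclideanSpace.single j 1, (0 : ℝ))) + a * F (z, s) - b * F (z, s) ^ 3)
        / F (z, s) := by
      rw [hGtdef]
      simp only
      rw [hLd _ hq, ← hFt, hsol s z hq, hlapf]
    have e2 : K2 (z, s) = (∑ j, fderiv ℝ
        (fun q' => fderiv ℝ F q' (EuclideanSpace.single j 1, (0 : ℝ))) (z, s)
        (EuclideanSpace.single j 1, (0 : ℝ))) / F (z, s)
        - (∑ j, (fderiv ℝ F (z, s) (EuclideanSpace.single j 1, (0 : ℝ))) ^ 2)
          / F (z, s) ^ 2 := by
      rw [hK2def]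
      simp only
      rw [Finset.sum_congr rfl (fun j _ => hGder j (z, s) hq _), Finset.sum_sub_distrib,
        ← Finset.sum_div, ← Finset.sum_div]
      congr 2
      exact Finset.sum_congr rfl fun j _ => by ring
    have e3 : K3 (z, s) = (∑ j, (fderiv ℝ F (z, s)
        (EuclideanSpace.single j 1, (0 : ℝ))) ^ 2) / F (z, s) ^ 2 := by
      rw [hK3def]
      simp only
      rw [Finset.sum_div]
      refine Finset.sum_congr rfl fun j _ => ?_
      rw [show G j (z, s) = fderiv ℝ L (z, s) (EuclideanSpace.single j 1, (0 : ℝ)) from rfl,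
        hLd _ hq, div_pow]
    rw [e1, e2, e3, hexp]
    field_simp
    ring
  have hVnhds : {q : EuclideanSpace ℝ (Fin n) × ℝ | 0 < q.2} ∈ nhds ((x, t) :
      EuclideanSpace ℝ (Fin n) × ℝ) :=
    (isOpen_lt continuous_const continuous_snd).mem_nhds ht
  -- symmetry of second derivatives of L
  have hdf : DifferentiableAt ℝ (fderiv ℝ L) (x, t) :=
    ((hLq _ ht).fderiv_right (m := 1) (by norm_cast)).differentiableAt (by norm_num)
  have happv : ∀ v w : EuclideanSpace ℝ (Fin n) × ℝ,
      fderiv ℝ (fun q => fderiv ℝ L q v) (x, t) w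
        = fderiv ℝ (fderiv ℝ L) (x, t) w v := by
    intro v w
    have h := (ContinuousLinearMap.apply ℝ ℝ v).hasFDerivAt.comp (x, t) hdf.hasFDerivAt
    rw [show (fun q => fderiv ℝ L q v)
        = ((ContinuousLinearMap.apply ℝ ℝ v) ∘ (fderiv ℝ L)) from rfl, h.fderiv]
    rfl
  have hsymm2 : IsSymmSndFDerivAt ℝ L (x, t) :=
    (hLq _ ht).isSymmSndFDerivAt (by simp only [minSmoothness_of_isRCLikeNormedField]; exact WithTop.coe_le_coe.mpr le_top)
  have hsymmi : ∀ i, fderiv ℝ (G i) (x, t) ((0 : EuclideanSpace ℝ (Fin n)), (1 : ℝ))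
      = fderiv ℝ Gt (x, t) (EuclideanSpace.single i 1, (0 : ℝ)) := by
    intro i
    calc fderiv ℝ (G i) (x, t) (0, 1)
        = fderiv ℝ (fderiv ℝ L) (x, t) (0, 1) (EuclideanSpace.single i 1, (0 : ℝ)) :=
          happv _ _
      _ = fderiv ℝ (fderiv ℝ L) (x, t) (EuclideanSpace.single i 1, (0 : ℝ)) (0, 1) :=
          hsymm2.eq _ _
      _ = fderiv ℝ Gt (x, t) (EuclideanSpace.single i 1, (0 : ℝ)) := (happv _ _).symm
  -- mixed time derivative of spatial partials
  have hmixed : ∀ i, HasDerivAt (fun s => fderiv ℝ (l s) x (EuclideanSpace.single i 1))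
      (fderiv ℝ (G i) (x, t) (0, 1)) t := by
    intro i
    have hdG : HasFDerivAt (G i) (fderiv ℝ (G i) (x, t)) (x, t) :=
      ((hGq i _ ht).differentiableAt (by norm_num)).hasFDerivAt
    refine (nws_sliceT hdG).congr_of_eventuallyEq ?_
    filter_upwards [eventually_gt_nhds ht] with r hr
    exact hgradl r hr x i
  -- time derivative of |∇l|²
  have LHS1 : deriv (fun s => ‖gradient (l s) x‖ ^ 2) t
      = ∑ i, 2 * G i (x, t) * fderiv ℝ (G i) (x, t) (0, 1) := by
    have hfun : (fun s => ‖gradient (l s) x‖ ^ 2)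
        = fun s => ∑ i, (fderiv ℝ (l s) x (EuclideanSpace.single i 1)) ^ 2 :=
      funext fun s => nws_norm_grad_sq _ _
    rw [hfun, (HasDerivAt.fun_sum (fun i _ => (hmixed i).fun_pow 2)).deriv]
    refine Finset.sum_congr rfl fun i _ => ?_
    rw [hgradl t ht x i]
    norm_num
  -- differentiability of K2, K3
  have hK2q : ∀ q : EuclideanSpace ℝ (Fin n) × ℝ, 0 < q.2 → ContDiffAt ℝ ∞ K2 q :=
    fun q hq => ContDiffAt.sum fun j _ => hD (G j) (hGq j) _ q hq
  have hK3q : ∀ q : EuclideanSpace ℝ (Fin n) × ℝ, 0 < q.2 → ContDiffAt ℝ ∞ K3 q :=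
    fun q hq => ContDiffAt.sum fun j _ => (hGq j q hq).pow 2
  -- derivative of the exponential term
  have hexpd : HasFDerivAt (fun q => Real.exp (2 * L q))
      ((Real.exp (2 * L (x, t))) • (2 : ℝ) • fderiv ℝ L (x, t)) (x, t) := by
    have h2L : HasFDerivAt (fun q => 2 * L q) ((2 : ℝ) • fderiv ℝ L (x, t)) (x, t) :=
      (((hLq _ ht).differentiableAt (by norm_num)).hasFDerivAt).const_mul 2
    simpa [Function.comp_def] using
      (Real.hasDerivAt_exp (2 * L (x, t))).comp_hasFDerivAt (x, t) h2L
  have hRd : HasFDerivAt (fun q => K2 q + K3 q + a - b * Real.exp (2 * L q))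
      (fderiv ℝ K2 (x, t) + fderiv ℝ K3 (x, t)
        - b • ((Real.exp (2 * L (x, t))) • (2 : ℝ) • fderiv ℝ L (x, t))) (x, t) :=
    ((((hK2q _ ht).differentiableAt (by norm_num)).hasFDerivAt.add
      (((hK3q _ ht).differentiableAt (by norm_num)).hasFDerivAt)).add_const a).sub
      (hexpd.const_mul b)
  have keyGt : fderiv ℝ Gt (x, t) = fderiv ℝ K2 (x, t) + fderiv ℝ K3 (x, t)
      - b • ((Real.exp (2 * L (x, t))) • (2 : ℝ) • fderiv ℝ L (x, t)) := by
    have hev : Gt =ᶠ[nhds ((x, t) : EuclideanSpace ℝ (Fin n) × ℝ)]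
        fun q => K2 q + K3 q + a - b * Real.exp (2 * L q) := by
      filter_upwards [hVnhds] with q hq
      exact hC q hq
    rw [hev.fderiv_eq, hRd.fderiv]
  have keyi : ∀ i, fderiv ℝ (G i) (x, t) (0, 1)
      = fderiv ℝ K2 (x, t) (EuclideanSpace.single i 1, (0 : ℝ))
        + fderiv ℝ K3 (x, t) (EuclideanSpace.single i 1, (0 : ℝ))
        - 2 * b * Real.exp (2 * L (x, t)) * G i (x, t) := by
    intro i
    rw [hsymmi i, keyGt]
    simp only [ContinuousLinearMap.sub_apply, ContinuousLinearMap.add_apply,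
      ContinuousLinearMap.smul_apply, smul_eq_mul]
    rw [show fderiv ℝ L (x, t) (EuclideanSpace.single i 1, (0 : ℝ)) = G i (x, t) from rfl]
    ring
  -- translate the RHS of the goal
  have Rlap : (inner ℝ (gradient (l t) x) (gradient (fun y => lap (l t) y) x) : ℝ)
      = ∑ i, G i (x, t) * fderiv ℝ K2 (x, t) (EuclideanSpace.single i 1, (0 : ℝ)) := by
    rw [nws_inner_grad_grad]
    refine Finset.sum_congr rfl fun i _ => ?_
    rw [hgradl t ht x i]
    congr 1
    have h1 : (fun y => lap (l t) y) = fun y => K2 (y, t) :=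
      funext fun y => hlapl t ht y
    rw [h1, hsliceX K2 hK2q x t ht]
  have Rnsq : (inner ℝ (gradient (l t) x) (gradient (fun y => ‖gradient (l t) y‖ ^ 2) x) : ℝ)
      = ∑ i, G i (x, t) * fderiv ℝ K3 (x, t) (EuclideanSpace.single i 1, (0 : ℝ)) := by
    rw [nws_inner_grad_grad]
    refine Finset.sum_congr rfl fun i _ => ?_
    rw [hgradl t ht x i]
    congr 1
    have h1 : (fun y => ‖gradient (l t) y‖ ^ 2) = fun y => K3 (y, t) :=
      funext fun y => hnsq t ht y
    rw [h1, hsliceX K3 hK3q x t ht]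
  have hnormval : ‖gradient (l t) x‖ ^ 2 = ∑ i, (G i (x, t)) ^ 2 := hnsq t ht x
  have hexpval : Real.exp (2 * l t x) = Real.exp (2 * L (x, t)) := by rw [hlL]
  rw [sub_left_inj, LHS1, Rlap, Rnsq, hnormval, hexpval]
  refine Eq.trans (Finset.sum_congr rfl fun i _ => by rw [keyi i]) ?_
  rw [Finset.mul_sum, Finset.mul_sum, Finset.mul_sum, Finset.sum_mul,
    ← Finset.sum_add_distrib, ← Finset.sum_sub_distrib]
  refine Finset.sum_congr rfl fun i _ => ?_
  ring
end

section
/- Let ω = (1/α)√(2(α−β)/n), μ = aα√(n/(2(α−β))), ν = ω + (αb/γ)√(n/(2(α−β))) with α > β ≥ 0, a, b > 0, γ < 0 satisfying 4γ(α−β) + nα²b < 0. Then the function φ(t) = (μ/(1 − e^{2μωt}))·((1/(ν−ω)) e^{2μωt} − 1/(ν+ω)) satisfies the differential inequality φ'(t) + (ωφ(t))² − (μ + νφ(t))² ≥ 0 for all t > 0. -/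
/-!
The inequality holds with equality: `φ` solves the Riccati equation `φ' = (μ + νφ)² − (ωφ)²`
exactly, as soon as its denominators `ν − ω`, `ν + ω` and `1 − e^{2μωt}` do not vanish.
The only nontrivial one is `ν + ω`: with `s = √(n / (2(α − β)))` one has `ω = 1 / (αs)`, so
`(ν + ω) · αγs · 2(α − β) = 4γ(α − β) + nα²b`, which is nonzero by hypothesis.
-/

open Real

noncomputable def riccatiSol (μ ω ν t : ℝ) : ℝ :=
  (μ / (1 - exp (2 * μ * ω * t))) * ((1 / (ν - ω)) * exp (2 * μ * ω * t) - 1 / (ν + ω))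

theorem hasDerivAt_riccatiSol {μ ω ν t : ℝ} (hsub : ν - ω ≠ 0) (hadd : ν + ω ≠ 0)
    (ht : 2 * μ * ω * t ≠ 0) :
    HasDerivAt (riccatiSol μ ω ν)
      ((μ + ν * riccatiSol μ ω ν t) ^ 2 - (ω * riccatiSol μ ω ν t) ^ 2) t := by
  have hE : HasDerivAt (fun t => exp (2 * μ * ω * t)) (exp (2 * μ * ω * t) * (2 * μ * ω)) t := by
    simpa using ((hasDerivAt_id t).const_mul (2 * μ * ω)).exp
  have hden : 1 - exp (2 * μ * ω * t) ≠ 0 := sub_ne_zero.mpr (Ne.symm (by simpa using ht))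
  have hquot := (hasDerivAt_const t μ).div ((hasDerivAt_const t 1).sub hE) hden
  simp only [Pi.div_def, Pi.sub_def] at hquot
  have h := hquot.mul ((hE.const_mul (1 / (ν - ω))).sub_const (1 / (ν + ω)))
  refine h.congr_deriv ?_
  simp only [riccatiSol]
  field_simp
  ring

theorem nu_add_omega_ne_zero {n α β b γ : ℝ} (hn : 0 < n) (hα : α ≠ 0) (hαβ : β < α)
    (hγ : γ ≠ 0) (hc : 4 * γ * (α - β) + n * α ^ 2 * b ≠ 0) :
    let ω := (1 / α) * √(2 * (α - β) / n)
    ω + α * b / γ * √(n / (2 * (α - β))) + ω ≠ 0 := by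
  intro ω
  have hab : 0 < α - β := sub_pos.mpr hαβ
  have hs_sq : √(n / (2 * (α - β))) ^ 2 = n / (2 * (α - β)) := sq_sqrt (by positivity)
  have hs : √(n / (2 * (α - β))) ≠ 0 := by positivity
  have hω : ω = (α * √(n / (2 * (α - β))))⁻¹ := by
    rw [mul_inv, ← sqrt_inv, inv_div, ← one_div]
  have key : (ω + α * b / γ * √(n / (2 * (α - β))) + ω) * (α * γ * √(n / (2 * (α - β)))) *
      (2 * (α - β)) = 4 * γ * (α - β) + n * α ^ 2 * b := by
    rw [hω]
    field_simp
    rw [hs_sq]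
    field_simp
    ring
  intro h
  rw [h, zero_mul, zero_mul] at key
  exact hc key.symm

/-- The explicit function `φ` solves the Riccati-type differential inequality
`φ' + (ωφ)² − (μ + νφ)² ≥ 0`. -/
theorem phi_riccati (n : ℕ) (hn : 1 ≤ n) (a b α β γ : ℝ)
    (ha : 0 < a) (hb : 0 < b) (hβ : 0 ≤ β) (hαβ : β < α) (hγ : γ < 0)
    (hc : 4 * γ * (α - β) + n * α ^ 2 * b < 0) :
    let ω := (1 / α) * Real.sqrt (2 * (α - β) / n)
    let μ := a * α * Real.sqrt (n / (2 * (α - β)))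
    let ν := ω + (α * b / γ) * Real.sqrt (n / (2 * (α - β)))
    let φ := fun t : ℝ => (μ / (1 - Real.exp (2 * μ * ω * t))) *
      ((1 / (ν - ω)) * Real.exp (2 * μ * ω * t) - 1 / (ν + ω))
    ∀ t : ℝ, 0 < t → deriv φ t + (ω * φ t) ^ 2 - (μ + ν * φ t) ^ 2 ≥ 0 := by
  intro ω μ ν φ t ht
  have hα : 0 < α := hβ.trans_lt hαβ
  have hab : 0 < α - β := sub_pos.mpr hαβ
  have hn' : (0 : ℝ) < n := by exact_mod_cast hn
  have hsub : ν - ω ≠ 0 := by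
    rw [show ν - ω = α * b / γ * √(n / (2 * (α - β))) by ring]
    exact mul_ne_zero (div_ne_zero (by positivity) hγ.ne) (by positivity)
  have hadd : ν + ω ≠ 0 := nu_add_omega_ne_zero hn' hα.ne' hαβ hγ.ne hc.ne
  have hexp : 2 * μ * ω * t ≠ 0 := by positivity
  rw [show φ = riccatiSol μ ω ν from rfl, (hasDerivAt_riccatiSol hsub hadd hexp).deriv]
  linarith
end

section
/- Let a, b > 0, n ≥ 1, α > β ≥ 0, γ < 0 with 4γ(α−β) + nα²b ≥ 0, and set T = (nα²/(2(α−β)(−aγ)))·(2((α−β)/(nα²))γ + b). Define ψ₁(t) = nα²/(2(α−β)t) and ψ₂(t) = −anα²γ(e^{2a(t−T)} + 1)/(nα²b(e^{2a(t−T)} + 1) + 4γ(α−β)). Then ψ₁(T) = ψ₂(T) = −aγ/(2((α−β)/(nα²))γ + b) and ψ₁'(T) = ψ₂'(T) = −2n(α−β)a²α²γ²/(nα²b + 2γ(α−β))². -/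
/-!
Put `M = nα²b + 2γ(α - β)`; condition (d) and `γ < 0` give `M > 0`, and `T = M / (2(α - β)(-aγ)) > 0`.
`ψ₁` is a hyperbola and `ψ₂` a Möbius transform of `e^{2a(t - T)}`, which equals `1` with derivative
`2a` at `t = T`. Hence both values and both derivatives at `T` are explicit rational expressions,
and the matching reduces to field identities in `M`.
-/

open Real

theorem hasDerivAt_const_div_mul (N k t : ℝ) (h : k * t ≠ 0) :
    HasDerivAt (fun t => N / (k * t)) (-(N * k) / (k * t) ^ 2) t :=
  ((hasDerivAt_const t N).fun_div ((hasDerivAt_id' t).const_mul k) h).congr_deriv (by ring)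

theorem HasDerivAt.mul_div_mul_add {f : ℝ → ℝ} {f' x : ℝ} (p q r : ℝ) (hf : HasDerivAt f f' x)
    (h : q * f x + r ≠ 0) :
    HasDerivAt (fun t => p * f t / (q * f t + r)) (p * r * f' / (q * f x + r) ^ 2) x :=
  ((hf.const_mul p).fun_div ((hf.const_mul q).add_const r) h).congr_deriv (by ring)

theorem hasDerivAt_exp_mul_sub_add_one (c s : ℝ) :
    HasDerivAt (fun t => exp (c * (t - s)) + 1) c s := by
  simpa using ((((hasDerivAt_id s).sub_const s).const_mul c).exp).add_const 1

theorem hasDerivAt_neg_mul_exp_add_one_div (p q r c s : ℝ) (h : q * 2 + r ≠ 0) :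
    HasDerivAt (fun t => -(p * (exp (c * (t - s)) + 1)) / (q * (exp (c * (t - s)) + 1) + r))
      (-(p * r * c) / (q * 2 + r) ^ 2) s := by
  have hs : exp (c * (s - s)) + 1 = 2 := by norm_num
  convert (hasDerivAt_exp_mul_sub_add_one c s).mul_div_mul_add (-p) q r (by rwa [hs]) using 1
  · simp only [neg_mul]
  · rw [hs]; ring

theorem psi_c1_matching_general (n : ℕ) (hn : 1 ≤ n) (a b α β γ : ℝ)
    (ha : 0 < a) (hβ : 0 ≤ β) (hαβ : β < α) (hγ : γ < 0)
    (hd : 0 ≤ 4 * γ * (α - β) + n * α ^ 2 * b) :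
    let T := (n * α ^ 2 / (2 * (α - β) * (-(a * γ)))) *
      (2 * ((α - β) / (n * α ^ 2)) * γ + b)
    let ψ₁ := fun t : ℝ => n * α ^ 2 / (2 * (α - β) * t)
    let ψ₂ := fun t : ℝ => -(a * n * α ^ 2 * γ * (Real.exp (2 * a * (t - T)) + 1)) /
      (n * α ^ 2 * b * (Real.exp (2 * a * (t - T)) + 1) + 4 * γ * (α - β))
    ψ₁ T = -(a * γ) / (2 * ((α - β) / (n * α ^ 2)) * γ + b) ∧
    ψ₂ T = -(a * γ) / (2 * ((α - β) / (n * α ^ 2)) * γ + b) ∧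
    deriv ψ₁ T = -(2 * n * (α - β) * a ^ 2 * α ^ 2 * γ ^ 2) /
      (n * α ^ 2 * b + 2 * γ * (α - β)) ^ 2 ∧
    deriv ψ₂ T = -(2 * n * (α - β) * a ^ 2 * α ^ 2 * γ ^ 2) /
      (n * α ^ 2 * b + 2 * γ * (α - β)) ^ 2 := by
  intro T ψ₁ ψ₂
  have hn₀ : (n : ℝ) ≠ 0 := by positivity
  have hα : α ≠ 0 := (hβ.trans_lt hαβ).ne'
  have hαβ₀ : 0 < α - β := sub_pos.2 hαβ
  have hM : 0 < (n : ℝ) * α ^ 2 * b + 2 * γ * (α - β) := by nlinarith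
  have hD : 2 * ((α - β) / (n * α ^ 2)) * γ + b =
      (n * α ^ 2 * b + 2 * γ * (α - β)) / (n * α ^ 2) := by
    field_simp; ring
  have hT : T = (n * α ^ 2 * b + 2 * γ * (α - β)) / (2 * (α - β) * (-(a * γ))) := by
    simp only [T, hD]; field_simp
  have hT₀ : 0 < 2 * (α - β) * T := by
    rw [hT]; exact mul_pos (by linarith) (div_pos hM (mul_pos (by linarith) (by nlinarith)))
  have h2M : n * α ^ 2 * b * 2 + 4 * γ * (α - β) = 2 * (n * α ^ 2 * b + 2 * γ * (α - β)) := by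
    ring
  have hE : exp (2 * a * (T - T)) + 1 = 2 := by norm_num
  refine ⟨?_, ?_, (hasDerivAt_const_div_mul _ _ T hT₀.ne').deriv.trans ?_,
    (hasDerivAt_neg_mul_exp_add_one_div _ _ _ _ T (by rw [h2M]; positivity)).deriv.trans ?_⟩
  · simp only [ψ₁]; rw [hT, hD]; field_simp
  · simp only [ψ₂, hE]; rw [hD, h2M]; field_simp
  · rw [hT]; field_simp
  · rw [h2M]; field_simp; ring

/-- C¹ matching of the two branches `ψ₁`, `ψ₂` of the correction function at `t = T`. -/
theorem psi_c1_matching (n : ℕ) (hn : 1 ≤ n) (a b α β γ : ℝ)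
    (ha : 0 < a) (hb : 0 < b) (hβ : 0 ≤ β) (hαβ : β < α) (hγ : γ < 0)
    (hd : 0 ≤ 4 * γ * (α - β) + n * α ^ 2 * b) :
    let T := (n * α ^ 2 / (2 * (α - β) * (-(a * γ)))) *
      (2 * ((α - β) / (n * α ^ 2)) * γ + b)
    let ψ₁ := fun t : ℝ => n * α ^ 2 / (2 * (α - β) * t)
    let ψ₂ := fun t : ℝ => -(a * n * α ^ 2 * γ * (Real.exp (2 * a * (t - T)) + 1)) /
      (n * α ^ 2 * b * (Real.exp (2 * a * (t - T)) + 1) + 4 * γ * (α - β))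
    ψ₁ T = -(a * γ) / (2 * ((α - β) / (n * α ^ 2)) * γ + b) ∧
    ψ₂ T = -(a * γ) / (2 * ((α - β) / (n * α ^ 2)) * γ + b) ∧
    deriv ψ₁ T = -(2 * n * (α - β) * a ^ 2 * α ^ 2 * γ ^ 2) /
      (n * α ^ 2 * b + 2 * γ * (α - β)) ^ 2 ∧
    deriv ψ₂ T = -(2 * n * (α - β) * a ^ 2 * α ^ 2 * γ ^ 2) /
      (n * α ^ 2 * b + 2 * γ * (α - β)) ^ 2 :=
  psi_c1_matching_general n hn a b α β γ ha hβ hαβ hγ hd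
end

section
/- Let f be a positive smooth solution to f_t = Δf + af − bf³ on ℝⁿ × (0,∞) with a, b > 0. Assume the differential Harnack inequality α Δ(log f) + β|∇ log f|² + γ e^{2 log f} + φ(t) ≥ 0 holds with β = 0 and γ = −nbα. Then for any 0 < t₁ < t₂ and x₁, x₂ ∈ ℝⁿ: f(x₂,t₂)/f(x₁,t₁) ≥ exp(−|x₂−x₁|²/(4(t₂−t₁))) · exp(a(1 + n/3)(t₂−t₁)) · ((1 − e^{2at₁})/(1 − e^{2at₂}))^{2n/3}. -/
open Real

lemma lap_log {n : ℕ} (g : EuclideanSpace ℝ (Fin n) → ℝ) (hg : ContDiff ℝ (⊤ : ℕ∞) g)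
    (hpos : ∀ y, 0 < g y) (x : EuclideanSpace ℝ (Fin n)) :
    lap (fun y => Real.log (g y)) x
      = lap g x / g x
        - (∑ i, (fderiv ℝ g x (EuclideanSpace.single i 1))^2) / (g x)^2 := by
  have hgd : Differentiable ℝ g := hg.differentiable (by simp)
  have key : ∀ i : Fin n, fderiv ℝ (fun y => fderiv ℝ (fun z => Real.log (g z)) y (EuclideanSpace.single i 1)) x (EuclideanSpace.single i 1)
      = fderiv ℝ (fun y => fderiv ℝ g y (EuclideanSpace.single i 1)) x (EuclideanSpace.single i 1) / g x
        - (fderiv ℝ g x (EuclideanSpace.single i 1))^2 / (g x)^2 := by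
    intro i
    set e := EuclideanSpace.single i (1:ℝ) with he
    have hfun : (fun y => fderiv ℝ (fun z => Real.log (g z)) y e)
        = fun y => (g y)⁻¹ * fderiv ℝ g y e := by
      funext y
      have : fderiv ℝ (Real.log ∘ g) y = (g y)⁻¹ • fderiv ℝ g y :=
        ((Real.hasDerivAt_log (hpos y).ne').comp_hasFDerivAt y (hgd y).hasFDerivAt).fderiv
      rw [show (fun z => Real.log (g z)) = Real.log ∘ g from rfl, this]
      simp
    have hu : HasFDerivAt (fun y => fderiv ℝ g y e)
        (fderiv ℝ (fun y => fderiv ℝ g y e) x) x :=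
      (((hg.fderiv_right (WithTop.coe_le_coe.mpr le_top)).clm_apply contDiff_const).differentiable one_ne_zero x).hasFDerivAt
    have hinv : HasFDerivAt (fun y => (g y)⁻¹) (-(g x ^ 2)⁻¹ • fderiv ℝ g x) x :=
      (hasDerivAt_inv (hpos x).ne').comp_hasFDerivAt x (hgd x).hasFDerivAt
    have hmul : HasFDerivAt (fun y => (g y)⁻¹ * fderiv ℝ g y e) _ x := hinv.mul hu
    rw [hfun, hmul.fderiv]
    have hgx := (hpos x).ne'
    simp only [ContinuousLinearMap.add_apply, ContinuousLinearMap.smul_apply,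
      ContinuousLinearMap.neg_apply, smul_eq_mul, neg_smul]
    field_simp
    ring
  unfold lap
  rw [Finset.sum_congr rfl (fun i _ => key i)]
  rw [Finset.sum_sub_distrib, ← Finset.sum_div, ← Finset.sum_div]

lemma fderiv_space {n : ℕ} (F : EuclideanSpace ℝ (Fin n) × ℝ → ℝ) (hF : ContDiff ℝ (⊤ : ℕ∞) F)
    (x v : EuclideanSpace ℝ (Fin n)) (t : ℝ) :
    fderiv ℝ (fun y => F (y, t)) x v = fderiv ℝ F (x, t) (v, 0) := by
  have h1 : HasFDerivAt (fun y : EuclideanSpace ℝ (Fin n) => (y, t))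
      ((ContinuousLinearMap.id ℝ _).prod 0) x :=
    (hasFDerivAt_id x).prodMk (hasFDerivAt_const t x)
  have h2 := ((hF.differentiable (by simp) (x, t)).hasFDerivAt.comp x h1).fderiv
  rw [show (fun y => F (y, t)) = (F ∘ fun y => (y, t)) from rfl, h2]
  simp

lemma deriv_time {n : ℕ} (F : EuclideanSpace ℝ (Fin n) × ℝ → ℝ) (hF : ContDiff ℝ (⊤ : ℕ∞) F)
    (x : EuclideanSpace ℝ (Fin n)) (t : ℝ) :
    deriv (fun s => F (x, s)) t = fderiv ℝ F (x, t) (0, 1) := by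
  have h1 : HasDerivAt (fun s : ℝ => (x, s)) ((0 : EuclideanSpace ℝ (Fin n)), (1 : ℝ)) t :=
    (hasDerivAt_const t x).prodMk (hasDerivAt_id t)
  exact ((hF.differentiable (by simp) (x, t)).hasFDerivAt.comp_hasDerivAt t h1).deriv

lemma fderiv_space' {n : ℕ} (f : ℝ → EuclideanSpace ℝ (Fin n) → ℝ)
    (hs : ContDiff ℝ (⊤ : ℕ∞) (fun p : EuclideanSpace ℝ (Fin n) × ℝ => f p.2 p.1))
    (x v : EuclideanSpace ℝ (Fin n)) (t : ℝ) :
    fderiv ℝ (f t) x v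
      = fderiv ℝ (fun p : EuclideanSpace ℝ (Fin n) × ℝ => f p.2 p.1) (x, t) (v, 0) :=
  fderiv_space _ hs x v t

lemma deriv_time' {n : ℕ} (f : ℝ → EuclideanSpace ℝ (Fin n) → ℝ)
    (hs : ContDiff ℝ (⊤ : ℕ∞) (fun p : EuclideanSpace ℝ (Fin n) × ℝ => f p.2 p.1))
    (x : EuclideanSpace ℝ (Fin n)) (t : ℝ) :
    deriv (fun s => f s x) t
      = fderiv ℝ (fun p : EuclideanSpace ℝ (Fin n) × ℝ => f p.2 p.1) (x, t) (0, 1) :=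
  deriv_time _ hs x t

lemma fderiv_split {n : ℕ} (F : EuclideanSpace ℝ (Fin n) × ℝ → ℝ)
    (q : EuclideanSpace ℝ (Fin n) × ℝ) (w : EuclideanSpace ℝ (Fin n)) (τ : ℝ) :
    fderiv ℝ F q (w, τ) = fderiv ℝ F q (w, 0) + τ * fderiv ℝ F q (0, 1) := by
  have : (w, τ) = (w, (0:ℝ)) + τ • ((0 : EuclideanSpace ℝ (Fin n)), (1:ℝ)) := by
    ext <;> simp
  rw [this, map_add, map_smul, smul_eq_mul]

lemma sum_single_smul {n : ℕ} (w : EuclideanSpace ℝ (Fin n)) :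
    ∑ i, w i • EuclideanSpace.single i (1:ℝ) = w := by
  ext j
  rw [show ((∑ i, w i • EuclideanSpace.single i (1:ℝ)) j) = ∑ i, (w i • EuclideanSpace.single i (1:ℝ)) j from
    by rw [WithLp.ofLp_sum, Finset.sum_apply]]
  simp [EuclideanSpace.single_apply]

lemma fderiv_dir_sum {n : ℕ} (g : EuclideanSpace ℝ (Fin n) → ℝ)
    (x w : EuclideanSpace ℝ (Fin n)) :
    fderiv ℝ g x w = ∑ i, w i * fderiv ℝ g x (EuclideanSpace.single i 1) := by
  conv_lhs => rw [← sum_single_smul w]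
  rw [map_sum]
  simp

lemma norm_sq_sum {n : ℕ} (w : EuclideanSpace ℝ (Fin n)) : ‖w‖^2 = ∑ i, (w i)^2 := by
  rw [EuclideanSpace.norm_eq, Real.sq_sqrt (by positivity)]
  simp [sq_abs]

lemma harnack_alg (LL G Et nR a b α : ℝ) (hα : α ≠ 0) (hb : b ≠ 0) (hn : nR ≠ 0)
    (hE1 : 1 - Et ≠ 0) :
    α * LL + (-nR*b*α)*G^2
      + (a*α/(1-Et))*(((-nR*b*α)/(α*b))*Et - α*(-nR*b*α)*nR/(4*(-nR*b*α)*α+α^2*b*nR))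
    = α*(LL - (nR*b*G^2 + (a/(1-Et))*(nR*Et + nR/3))) := by
  have c1 : (-nR*b*α)/(α*b) = -nR := by field_simp
  have c2 : α*(-nR*b*α)*nR/(4*(-nR*b*α)*α+α^2*b*nR) = nR/3 := by
    rw [show 4*(-nR*b*α)*α+α^2*b*nR = -(3*nR*b*α^2) by ring]
    rw [div_eq_div_iff (neg_ne_zero.mpr (mul_ne_zero (mul_ne_zero
      (mul_ne_zero three_ne_zero hn) hb) (pow_ne_zero 2 hα))) (by norm_num)]
    ring
  rw [c1, c2]
  field_simp
  ring

lemma hprime_alg (nR a τ NW Et : ℝ) (hτ : τ ≠ 0) (hE1 : 1 - Et ≠ 0) (hE2 : Et - 1 ≠ 0) :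
    (-NW/(4*τ) + a*(1+nR/3)*τ) - (2*nR/3) * ((Et*(2*a*τ))/(Et-1))
      = -NW/(4*τ) + τ*a + τ*((a/(1-Et))*(nR*Et + nR/3)) := by
  field_simp
  ring

set_option maxHeartbeats 2000000 in
/-- Classical Harnack inequality for the Newell-Whitehead equation, obtained from the
differential Harnack estimate with `β = 0` and `γ = −nbα`. -/
theorem classical_harnack {n : ℕ} (hn : 1 ≤ n) (a b α : ℝ)
    (ha : 0 < a) (hb : 0 < b) (hα : 0 < α)
    (f : ℝ → EuclideanSpace ℝ (Fin n) → ℝ)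
    (hsmooth : ContDiff ℝ (⊤ : ℕ∞) (fun p : EuclideanSpace ℝ (Fin n) × ℝ => f p.2 p.1))
    (hpos : ∀ t x, 0 < t → 0 < f t x)
    (hsol : ∀ t x, 0 < t →
      deriv (fun s => f s x) t = lap (f t) x + a * f t x - b * (f t x) ^ 3)
    (hHarnack : ∀ t x, 0 < t →
      0 ≤ α * lap (fun y => Real.log (f t y)) x
          + (-(n : ℝ) * b * α) * Real.exp (2 * Real.log (f t x))
          + (a * α / (1 - Real.exp (2 * a * t))) *
            (((-(n : ℝ) * b * α) / (α * b)) * Real.exp (2 * a * t)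
              - α * (-(n : ℝ) * b * α) * n /
                (4 * (-(n : ℝ) * b * α) * α + α ^ 2 * b * n))) :
    ∀ (t₁ t₂ : ℝ) (x₁ x₂ : EuclideanSpace ℝ (Fin n)), 0 < t₁ → t₁ < t₂ →
      f t₂ x₂ / f t₁ x₁ ≥
        Real.exp (-‖x₂ - x₁‖ ^ 2 / (4 * (t₂ - t₁))) *
          Real.exp (a * (1 + n / 3) * (t₂ - t₁)) *
          ((1 - Real.exp (2 * a * t₁)) / (1 - Real.exp (2 * a * t₂))) ^ (2 * (n : ℝ) / 3) := by
  intro t₁ t₂ x₁ x₂ ht₁ ht₁₂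
  have hnR : (1:ℝ) ≤ (n:ℝ) := by exact_mod_cast hn
  have hnne : ((n:ℝ)) ≠ 0 := by linarith
  set w := x₂ - x₁ with hw_def
  set τ := t₂ - t₁ with hτ_def
  have hτ : 0 < τ := sub_pos.mpr ht₁₂
  set C : ℝ := -‖w‖^2/(4*τ) + a*(1+(n:ℝ)/3)*τ with hC_def
  set h : ℝ → ℝ := fun s => Real.log (f (t₁ + s*τ) (x₁ + s • w)) with hh_def
  set H : ℝ → ℝ := fun s => C * s - (2*(n:ℝ)/3) * Real.log (Real.exp (2*a*(t₁ + s*τ)) - 1)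
    with hH_def
  -- key derivative estimate
  have key : ∀ s : ℝ, 0 < t₁ + s*τ →
      ∃ d : ℝ, 0 ≤ d ∧ HasDerivAt (fun r => h r - H r) d s := by
    intro s ht
    set t := t₁ + s * τ with ht_def
    set X := x₁ + s • w with hX_def
    have hG : 0 < f t X := hpos t X ht
    have hEgt : 1 < Real.exp (2*a*t) := by
      have h0 : (0:ℝ) < 2*a*t := by positivity
      have := Real.exp_lt_exp.mpr h0
      simpa using this
    have hE1 : (1:ℝ) - Real.exp (2*a*t) ≠ 0 := by linarith
    have hE2 : Real.exp (2*a*t) - 1 ≠ 0 := by linarith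
    -- derivative of h
    have hpath : HasDerivAt (fun r : ℝ => ((x₁ + r • w, t₁ + r * τ) :
        EuclideanSpace ℝ (Fin n) × ℝ)) (w, τ) s := by
      have h1 : HasDerivAt (fun r : ℝ => x₁ + r • w) w s := by
        have := ((hasDerivAt_id s).smul_const w).const_add x₁
        simpa using this
      have h2 : HasDerivAt (fun r : ℝ => t₁ + r * τ) τ s := by
        simpa using ((hasDerivAt_id s).mul_const τ).const_add t₁
      exact h1.prodMk h2
    have hFc : HasDerivAt (fun r : ℝ => f (t₁ + r*τ) (x₁ + r • w))
        (fderiv ℝ (fun p : EuclideanSpace ℝ (Fin n) × ℝ => f p.2 p.1) (X, t) (w, τ)) s :=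
      by have := (hsmooth.differentiable (by simp) (X, t)).hasFDerivAt.comp_hasDerivAt s hpath; exact this
    have hhD : HasDerivAt h
        ((fderiv ℝ (fun p : EuclideanSpace ℝ (Fin n) × ℝ => f p.2 p.1) (X, t) (w, τ)) / f t X) s :=
      hFc.log hG.ne'
    -- derivative of H
    have hq : HasDerivAt (fun r : ℝ => Real.exp (2*a*(t₁+r*τ)) - 1)
        (Real.exp (2*a*t) * (2*a*τ)) s := by
      have h2 : HasDerivAt (fun r : ℝ => 2*a*(t₁+r*τ)) (2*a*τ) s := by
        have := (((hasDerivAt_id s).mul_const τ).const_add t₁).const_mul (2*a)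
        simpa [mul_assoc] using this
      simpa using h2.exp.sub_const 1
    have hHD : HasDerivAt H
        (C - (2*(n:ℝ)/3) * ((Real.exp (2*a*t) * (2*a*τ)) / (Real.exp (2*a*t) - 1))) s := by
      have hc : HasDerivAt (fun r : ℝ => C * r) C s := by
        simpa using (hasDerivAt_id s).const_mul C
      exact hc.sub ((hq.log hE2).const_mul (2*(n:ℝ)/3))
    -- Harnack simplification
    have hexp2 : Real.exp (2 * Real.log (f t X)) = (f t X)^2 := by
      rw [two_mul, Real.exp_add, Real.exp_log hG, sq]
    have hLL : (n:ℝ)*b*(f t X)^2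
          + (a/(1-Real.exp (2*a*t)))*((n:ℝ)*Real.exp (2*a*t) + (n:ℝ)/3)
        ≤ lap (fun y => Real.log (f t y)) X := by
      have hHar := hHarnack t X ht
      rw [hexp2] at hHar
      rw [harnack_alg (lap (fun y => Real.log (f t y)) X) (f t X) (Real.exp (2*a*t))
        (n:ℝ) a b α hα.ne' hb.ne' hnne hE1] at hHar
      nlinarith [hHar, hα]
    -- smoothness of f t
    have hg_cd : ContDiff ℝ (⊤ : ℕ∞) (f t) := by
      have : ContDiff ℝ (⊤ : ℕ∞) (fun y : EuclideanSpace ℝ (Fin n) =>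
          (fun p : EuclideanSpace ℝ (Fin n) × ℝ => f p.2 p.1) (y, t)) :=
        hsmooth.comp (contDiff_id.prodMk contDiff_const)
      exact this
    have hll := lap_log (f t) hg_cd (fun y => hpos t y ht) X
    set S1 : ℝ := ∑ i, w i * fderiv ℝ (f t) X (EuclideanSpace.single i 1) with hS1_def
    set S2 : ℝ := ∑ i, (fderiv ℝ (f t) X (EuclideanSpace.single i 1))^2 with hS2_def
    have hlapg : lap (f t) X = f t X * lap (fun y => Real.log (f t y)) X + S2 / f t X := by
      rw [hll]
      field_simp
      ring
    have e0 : fderiv ℝ (fun p : EuclideanSpace ℝ (Fin n) × ℝ => f p.2 p.1) (X, t) (w, τ)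
        = S1 + τ * (lap (f t) X + a * f t X - b * (f t X)^3) := by
      rw [fderiv_split, ← fderiv_space' f hsmooth X w t, ← deriv_time' f hsmooth X t,
        hsol t X ht, fderiv_dir_sum]
    have hd_eq : (fderiv ℝ (fun p : EuclideanSpace ℝ (Fin n) × ℝ => f p.2 p.1) (X, t) (w, τ))
          / f t X
        = S1 / f t X + τ * (S2 / (f t X)^2)
          + τ * lap (fun y => Real.log (f t y)) X + τ * a - τ * b * (f t X)^2 := by
      rw [e0, hlapg]
      field_simp
      ring
    -- coordinatewise quadratic bound
    have hsum : -‖w‖^2 / (4*τ) ≤ S1 / f t X + τ * (S2 / (f t X)^2) := by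
      have hsplit : S1 / f t X + τ * (S2 / (f t X)^2)
          = ∑ i, (w i * (fderiv ℝ (f t) X (EuclideanSpace.single i 1) / f t X)
              + τ * (fderiv ℝ (f t) X (EuclideanSpace.single i 1) / f t X)^2) := by
        rw [hS1_def, hS2_def, Finset.sum_div, Finset.sum_div, Finset.mul_sum,
          ← Finset.sum_add_distrib]
        refine Finset.sum_congr rfl (fun i _ => ?_)
        rw [mul_div_assoc, div_pow]
      have hnorm : -‖w‖^2 / (4*τ) = ∑ i, (-(w i)^2 / (4*τ)) := by
        rw [neg_div, norm_sq_sum w, Finset.sum_div, ← Finset.sum_neg_distrib]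
        exact Finset.sum_congr rfl (fun i _ => by rw [neg_div])
      rw [hsplit, hnorm]
      apply Finset.sum_le_sum
      intro i _
      set u := fderiv ℝ (f t) X (EuclideanSpace.single i 1) / f t X
      rw [neg_div, neg_le]
      rw [le_div_iff₀ (by positivity : (0:ℝ) < 4*τ)]
      nlinarith [sq_nonneg (2*τ*u + w i), hτ]
    -- combine
    refine ⟨(fderiv ℝ (fun p : EuclideanSpace ℝ (Fin n) × ℝ => f p.2 p.1) (X, t) (w, τ)) / f t X
      - (C - (2*(n:ℝ)/3) * ((Real.exp (2*a*t) * (2*a*τ)) / (Real.exp (2*a*t) - 1))),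
      ?_, hhD.sub hHD⟩
    have hψ : C - (2*(n:ℝ)/3) * ((Real.exp (2*a*t) * (2*a*τ)) / (Real.exp (2*a*t) - 1))
        = -‖w‖^2/(4*τ) + τ*a
          + τ*((a/(1-Real.exp (2*a*t)))*((n:ℝ)*Real.exp (2*a*t) + (n:ℝ)/3)) := by
      rw [hC_def]
      exact hprime_alg (n:ℝ) a τ (‖w‖^2) (Real.exp (2*a*t)) hτ.ne' hE1 hE2
    rw [hd_eq, hψ]
    have hmul := mul_le_mul_of_nonneg_left hLL hτ.le
    have hbG : 0 ≤ τ*b*(f t X)^2*((n:ℝ)-1) := by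
      apply mul_nonneg _ (by linarith)
      positivity
    nlinarith [hsum, hmul, hbG]
  -- monotonicity
  have hmem : ∀ s : ℝ, s ∈ Set.Icc (0:ℝ) 1 → 0 < t₁ + s*τ := by
    intro s hs
    have := mul_nonneg hs.1 hτ.le
    linarith
  have hmono : MonotoneOn (fun r => h r - H r) (Set.Icc 0 1) := by
    apply monotoneOn_of_deriv_nonneg (convex_Icc 0 1)
    · intro s hs
      obtain ⟨d, _, hdD⟩ := key s (hmem s hs)
      exact hdD.differentiableAt.continuousAt.continuousWithinAt
    · intro s hs
      rw [interior_Icc] at hs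
      obtain ⟨d, _, hdD⟩ := key s (hmem s ⟨hs.1.le, hs.2.le⟩)
      exact hdD.differentiableAt.differentiableWithinAt
    · intro s hs
      rw [interior_Icc] at hs
      obtain ⟨d, hd0, hdD⟩ := key s (hmem s ⟨hs.1.le, hs.2.le⟩)
      rw [hdD.deriv]
      exact hd0
  have h01 := hmono (Set.left_mem_Icc.mpr zero_le_one) (Set.right_mem_Icc.mpr zero_le_one)
    zero_le_one
  simp only [hh_def, hH_def] at h01
  have e1 : t₁ + 1*τ = t₂ := by rw [hτ_def]; ring
  have e2 : x₁ + (1:ℝ) • w = x₂ := by rw [one_smul, hw_def]; abel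
  have e3 : t₁ + 0*τ = t₁ := by ring
  have e4 : x₁ + (0:ℝ) • w = x₁ := by rw [zero_smul, add_zero]
  rw [e1, e2, e3, e4] at h01
  -- final assembly
  have hf₁ : 0 < f t₁ x₁ := hpos t₁ x₁ ht₁
  have hf₂ : 0 < f t₂ x₂ := hpos t₂ x₂ (ht₁.trans ht₁₂)
  have hE₁ : 1 < Real.exp (2*a*t₁) := by
    have h0 : (0:ℝ) < 2*a*t₁ := by positivity
    have := Real.exp_lt_exp.mpr h0
    simpa using this
  have hE₂ : 1 < Real.exp (2*a*t₂) := by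
    have h0 : (0:ℝ) < 2*a*t₂ := mul_pos (mul_pos two_pos ha) (ht₁.trans ht₁₂)
    have := Real.exp_lt_exp.mpr h0
    simpa using this
  have hr : 0 < (1 - Real.exp (2*a*t₁)) / (1 - Real.exp (2*a*t₂)) :=
    div_pos_iff.mpr (Or.inr ⟨by linarith, by linarith⟩)
  rw [ge_iff_le, Real.rpow_def_of_pos hr]
  have hlhs : f t₂ x₂ / f t₁ x₁ = Real.exp (Real.log (f t₂ x₂) - Real.log (f t₁ x₁)) := by
    rw [Real.exp_sub, Real.exp_log hf₂, Real.exp_log hf₁]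
  rw [hlhs, ← Real.exp_add, ← Real.exp_add, Real.exp_le_exp]
  have hlogr : Real.log ((1 - Real.exp (2*a*t₁)) / (1 - Real.exp (2*a*t₂)))
      = Real.log (Real.exp (2*a*t₁) - 1) - Real.log (Real.exp (2*a*t₂) - 1) := by
    rw [show (1 - Real.exp (2*a*t₁)) / (1 - Real.exp (2*a*t₂))
        = (Real.exp (2*a*t₁) - 1) / (Real.exp (2*a*t₂) - 1) from by
      rw [← neg_sub (Real.exp (2*a*t₁)) 1, ← neg_sub (Real.exp (2*a*t₂)) 1, neg_div_neg_eq]]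
    exact Real.log_div (by linarith) (by linarith)
  rw [hlogr]
  rw [hC_def] at h01
  push_cast
  linarith [h01]
end
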